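/- The bracket on ℝ⁴ given by [e₁,e₃]=[e₄,e₂]=e₁ and [e₁,e₄]=[e₂,e₃]=e₂ satisfies the Jacobi identity, and with the standard hypercomplex structure and metric g(x,y)=x¹y¹+x²y²-x³y³-x⁴y⁴, the Lee forms have only nonzero components θ₁(e₄) = -2, θ₂(e₁) = 4, θ₃(e₂) = 4, so that the W-conditions θ₂∘J₂ = θ₃∘J₃ = -2(θ₁∘J₁) hold. -/

import Mathlib

noncomputable section

/-- The underlying 4-dimensional real vector space. -/
abbrev V : Type := Fin 4 → ℝ

/-- The standard basis of ℝ⁴. -/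
def e : Fin 4 → V := fun i => Pi.single i 1

/-- The neutral metric g(x,y) = x¹y¹ + x²y² - x³y³ - x⁴y⁴. -/
def g (x y : V) : ℝ := x 0 * y 0 + x 1 * y 1 - x 2 * y 2 - x 3 * y 3

/-- J₁ of the standard hypercomplex structure. -/
def J1 (x : V) : V := ![-x 1, x 0, x 3, -x 2]

/-- J₂ of the standard hypercomplex structure. -/
def J2 (x : V) : V := ![-x 2, -x 3, x 0, x 1]

/-- J₃ of the standard hypercomplex structure. -/
def J3 (x : V) : V := ![x 3, -x 2, x 1, -x 0]

/-- The bracket of type (hc3), case of signature (2,0):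
[e₁,e₃]=[e₄,e₂]=e₁, [e₁,e₄]=[e₂,e₃]=e₂. -/
def br (x y : V) : V :=
  ![x 0 * y 2 - x 2 * y 0 + x 3 * y 1 - x 1 * y 3,
    x 0 * y 3 - x 3 * y 0 + x 1 * y 2 - x 2 * y 1, 0, 0]


/-- Structure tensor F(x,y,z) = g((∇ₓJ)y, z) = g(∇ₓ(Jy) - J(∇ₓy), z). -/
def F (J : V → V) (nabla : V → V → V) (x y z : V) : ℝ :=
  g (nabla x (J y) - J (nabla x y)) z

/-- Lee form θ(z) = Σᵢ gⁱⁱ F(eᵢ,eᵢ,z) with gⁱⁱ = (1,1,-1,-1). -/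
def theta (J : V → V) (nabla : V → V → V) (z : V) : ℝ :=
  F J nabla (e 0) (e 0) z + F J nabla (e 1) (e 1) z
    - F J nabla (e 2) (e 2) z - F J nabla (e 3) (e 3) z

/-! The Koszul formula determines `g(∇ₓ y, z)`, so each `Fₐ` is an explicit expression in the
bracket and the Lee forms are the linear forms `-2 z⁴`, `4 z¹`, `4 z²`; the W-conditions are then
read off from the action of the `Jₐ` on coordinates. -/

def koszul (x y z : V) : ℝ := g (br x y) z + g (br z x) y + g (br z y) x

lemma br_jacobi (x y z : V) : br (br x y) z + br (br y z) x + br (br z x) y = 0 := by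
  funext j
  fin_cases j <;> simp [br] <;> ring

lemma mul_e_apply (c : ℝ) (i k : Fin 4) : c * e i k = if i = k then c else 0 := by
  simp [e, Pi.single_apply, eq_comm]

lemma g_sub_left (a b z : V) : g (a - b) z = g a z - g b z := by
  simp only [g, Pi.sub_apply]
  ring

-- The sign is explicit (`J₁` is `g`-skew, `J₂`, `J₃` are `g`-symmetric) so that all three
-- instantiate `F_eq_koszul`.
lemma g_J1_left (v z : V) : g (J1 v) z = -1 * g v (J1 z) := by
  simp only [g, J1, Matrix.cons_val_zero, Matrix.cons_val_one, Matrix.cons_val]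
  ring

lemma g_J2_left (v z : V) : g (J2 v) z = 1 * g v (J2 z) := by
  simp only [g, J2, Matrix.cons_val_zero, Matrix.cons_val_one, Matrix.cons_val]
  ring

lemma g_J3_left (v z : V) : g (J3 v) z = 1 * g v (J3 z) := by
  simp only [g, J3, Matrix.cons_val_zero, Matrix.cons_val_one, Matrix.cons_val]
  ring

section LeviCivita

variable {nabla : V → V → V} (hK : ∀ x y z : V, 2 * g (nabla x y) z = koszul x y z)
include hK

lemma F_eq_koszul {J : V → V} {s : ℝ} (hJ : ∀ v z : V, g (J v) z = s * g v (J z))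
    (x y z : V) : F J nabla x y z = (koszul x (J y) z - s * koszul x y (J z)) / 2 := by
  rw [F, g_sub_left, hJ, ← hK, ← hK]
  ring

lemma theta_J1_apply (z : V) : theta J1 nabla z = -2 * z 3 := by
  simp only [theta, F_eq_koszul hK g_J1_left, koszul, g, br, J1, e, Pi.single_apply,
    Matrix.cons_val_zero, Matrix.cons_val_one, Matrix.cons_val, Fin.reduceEq, if_true, if_false]
  ring

lemma theta_J2_apply (z : V) : theta J2 nabla z = 4 * z 0 := by
  simp only [theta, F_eq_koszul hK g_J2_left, koszul, g, br, J2, e, Pi.single_apply,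
    Matrix.cons_val_zero, Matrix.cons_val_one, Matrix.cons_val, Fin.reduceEq, if_true, if_false]
  ring

lemma theta_J3_apply (z : V) : theta J3 nabla z = 4 * z 1 := by
  simp only [theta, F_eq_koszul hK g_J3_left, koszul, g, br, J3, e, Pi.single_apply,
    Matrix.cons_val_zero, Matrix.cons_val_one, Matrix.cons_val, Fin.reduceEq, if_true, if_false]
  ring

end LeviCivita

/-- The (hc3b) bracket satisfies Jacobi; the Lee forms have only the nonzero
components θ₁(e₄)=-2, θ₂(e₁)=4, θ₃(e₂)=4; and θ₂∘J₂ = θ₃∘J₃ = -2(θ₁∘J₁). -/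
theorem hc3b_lee_forms (nabla : V → V → V)
    (hK : ∀ x y z : V,
      2 * g (nabla x y) z = g (br x y) z + g (br z x) y + g (br z y) x) :
    (∀ x y z : V, br (br x y) z + br (br y z) x + br (br z x) y = 0) ∧
    (∀ i : Fin 4, theta J1 nabla (e i) = if i = 3 then -2 else 0) ∧
    (∀ i : Fin 4, theta J2 nabla (e i) = if i = 0 then 4 else 0) ∧
    (∀ i : Fin 4, theta J3 nabla (e i) = if i = 1 then 4 else 0) ∧
    (∀ z : V, theta J2 nabla (J2 z) = theta J3 nabla (J3 z)) ∧
    (∀ z : V, theta J3 nabla (J3 z) = -2 * theta J1 nabla (J1 z)) := by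
  refine ⟨br_jacobi, fun i => ?_, fun i => ?_, fun i => ?_, fun z => ?_, fun z => ?_⟩
  · rw [theta_J1_apply hK, mul_e_apply]
  · rw [theta_J2_apply hK, mul_e_apply]
  · rw [theta_J3_apply hK, mul_e_apply]
  · rw [theta_J2_apply hK, theta_J3_apply hK]
    simp [J2, J3]
  · rw [theta_J3_apply hK, theta_J1_apply hK]
    simp only [J3, J1, Matrix.cons_val_zero, Matrix.cons_val_one, Matrix.cons_val]
    ring
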